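/- Let Q be a Markov generator on a finite set Ω reversible with respect to π, with partition {Ω_i}, projection chain (Q̄, π̄), restriction chains (Q_i, π_i), couplings κ_{ij} of π_i and π_j for pairs with Q̄(i,j) > 0, and χ := min π(x)Q(x,y)/(π̄(i)Q̄(i,j)κ_{ij}(x,y)) over all quadruples with positive denominator. Then the modified log-Sobolev constant satisfies α(Q) ≥ min{ χ·α(Q̄), min_i α(Q_i) }. -/

import Mathlib

open Finset

/-- Expectation of `f` under `π`. -/
def expec {Ω : Type*} [Fintype Ω] (π f : Ω → ℝ) : ℝ := ∑ x, π x * f x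

/-- Entropy of a positive `f` under `π`. -/
noncomputable def entOf {Ω : Type*} [Fintype Ω] (π f : Ω → ℝ) : ℝ :=
  expec π (fun x => f x * Real.log (f x)) - expec π f * Real.log (expec π f)

/-!
Conditioning on the blocks splits the entropy as
`Ent_π f = ∑ i, π̄ i * Ent_{π_i} f + Ent_π̄ g` with `g i = E_{π_i} f`, and reversibility writes
the Dirichlet form as `½ ∑ π x Q x y (f x - f y)(log f x - log f y)`. The pairs inside a block
make up `∑ i, π̄ i * E_i(f, log f)`, which dominates the first part of the entropy through the
restriction inequalities. For blocks `i ≠ j`, the function `(a, b) ↦ (a - b)(log a - log b)` is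
jointly convex (the log-sum inequality applied in both orders), so Jensen along the coupling
`κ i j`, whose marginals turn the averages of `f x` and `f y` into `g i` and `g j`, together with
the defining inequality of `χ`, bounds the cross-block pairs below by `χ` times the Dirichlet form
of `g` for the projection chain, hence by `χ ᾱ Ent_π̄ g`.
-/

open Real (log log_le_log log_div log_mul log_one one_sub_inv_le_log_of_pos)

-- The left side is the tangent plane at `(c, d)` of the jointly convex
-- `(a, b) ↦ a * (log a - log b)`.
lemma tangent_le_mul_log_sub_log {a b c d : ℝ} (ha : 0 < a) (hb : 0 < b) (hc : 0 < c)
    (hd : 0 < d) : a * (log c - log d) + a - b * (c / d) ≤ a * (log a - log b) := by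
  have h := one_sub_inv_le_log_of_pos (x := a * d / (b * c)) (by positivity)
  rw [log_div (by positivity) (by positivity), log_mul ha.ne' hd.ne', log_mul hb.ne' hc.ne',
    inv_div] at h
  have key : a - b * (c / d) = a * (1 - b * c / (a * d)) := by field_simp
  nlinarith [mul_le_mul_of_nonneg_left h ha.le]

theorem log_sum_inequality {ι : Type*} (s : Finset ι) {w a b : ι → ℝ}
    (hw : ∀ i ∈ s, 0 ≤ w i) (ha : ∀ i ∈ s, 0 < a i) (hb : ∀ i ∈ s, 0 < b i)
    (hA : 0 < ∑ i ∈ s, w i * a i) (hB : 0 < ∑ i ∈ s, w i * b i) :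
    (∑ i ∈ s, w i * a i) * (log (∑ i ∈ s, w i * a i) - log (∑ i ∈ s, w i * b i)) ≤
      ∑ i ∈ s, w i * (a i * (log (a i) - log (b i))) := by
  have hsum : ∀ L r : ℝ, ∑ i ∈ s, w i * (a i * L + a i - b i * r) =
      (∑ i ∈ s, w i * a i) * L + ∑ i ∈ s, w i * a i - (∑ i ∈ s, w i * b i) * r := by
    intro L r
    rw [sum_mul, sum_mul, ← sum_add_distrib, ← sum_sub_distrib]
    exact sum_congr rfl fun i _ => by ring
  have hterm := sum_le_sum fun i hi => mul_le_mul_of_nonneg_left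
    (tangent_le_mul_log_sub_log (ha i hi) (hb i hi) hA hB) (hw i hi)
  rw [hsum, mul_div_cancel₀ _ hB.ne'] at hterm
  linarith

theorem sub_mul_log_sub_log_le_sum {ι : Type*} (s : Finset ι) {w a b : ι → ℝ}
    (hw : ∀ i ∈ s, 0 ≤ w i) (ha : ∀ i ∈ s, 0 < a i) (hb : ∀ i ∈ s, 0 < b i)
    (hA : 0 < ∑ i ∈ s, w i * a i) (hB : 0 < ∑ i ∈ s, w i * b i) :
    (∑ i ∈ s, w i * a i - ∑ i ∈ s, w i * b i) *
        (log (∑ i ∈ s, w i * a i) - log (∑ i ∈ s, w i * b i)) ≤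
      ∑ i ∈ s, w i * ((a i - b i) * (log (a i) - log (b i))) := by
  have hab := log_sum_inequality s hw ha hb hA hB
  have hba := log_sum_inequality s hw hb ha hB hA
  calc _ = (∑ i ∈ s, w i * a i) * (log (∑ i ∈ s, w i * a i) - log (∑ i ∈ s, w i * b i)) +
        (∑ i ∈ s, w i * b i) * (log (∑ i ∈ s, w i * b i) - log (∑ i ∈ s, w i * a i)) := by ring
    _ ≤ ∑ i ∈ s, w i * (a i * (log (a i) - log (b i))) +
        ∑ i ∈ s, w i * (b i * (log (b i) - log (a i))) := add_le_add hab hba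
    _ = _ := by rw [← sum_add_distrib]; exact sum_congr rfl fun i _ => by ring

theorem sub_mul_log_sub_log_le_sum_coupling {α β : Type*} (s : Finset α) (t : Finset β)
    {κ : α → β → ℝ} {μ a : α → ℝ} {ν b : β → ℝ} (hκ : ∀ x ∈ s, ∀ y ∈ t, 0 ≤ κ x y)
    (hμ : ∀ x ∈ s, ∑ y ∈ t, κ x y = μ x) (hν : ∀ y ∈ t, ∑ x ∈ s, κ x y = ν y)
    (ha : ∀ x ∈ s, 0 < a x) (hb : ∀ y ∈ t, 0 < b y)
    (hA : 0 < ∑ x ∈ s, μ x * a x) (hB : 0 < ∑ y ∈ t, ν y * b y) :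
    (∑ x ∈ s, μ x * a x - ∑ y ∈ t, ν y * b y) *
        (log (∑ x ∈ s, μ x * a x) - log (∑ y ∈ t, ν y * b y)) ≤
      ∑ x ∈ s, ∑ y ∈ t, κ x y * ((a x - b y) * (log (a x) - log (b y))) := by
  have hA' : ∑ q ∈ s ×ˢ t, κ q.1 q.2 * a q.1 = ∑ x ∈ s, μ x * a x :=
    (sum_product' s t fun x y => κ x y * a x).trans
      (sum_congr rfl fun x hx => by rw [← sum_mul, hμ x hx])
  have hB' : ∑ q ∈ s ×ˢ t, κ q.1 q.2 * b q.2 = ∑ y ∈ t, ν y * b y :=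
    (sum_product_right' s t fun x y => κ x y * b y).trans
      (sum_congr rfl fun y hy => by rw [← sum_mul, hν y hy])
  have h := sub_mul_log_sub_log_le_sum (s ×ˢ t) (w := fun q => κ q.1 q.2)
    (a := fun q => a q.1) (b := fun q => b q.2)
    (fun q hq => hκ _ (mem_product.1 hq).1 _ (mem_product.1 hq).2)
    (fun q hq => ha _ (mem_product.1 hq).1) (fun q hq => hb _ (mem_product.1 hq).2)
    (hA'.symm ▸ hA) (hB'.symm ▸ hB)
  rw [hA', hB'] at h
  exact h.trans_eq (sum_product' s t fun x y => κ x y * ((a x - b y) * (log (a x) - log (b y))))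

lemma sub_mul_log_sub_log_nonneg {a b : ℝ} (ha : 0 < a) (hb : 0 < b) :
    0 ≤ (a - b) * (log a - log b) := by
  rcases le_total a b with h | h
  · exact mul_nonneg_of_nonpos_of_nonpos (by linarith) (by linarith [log_le_log ha h])
  · exact mul_nonneg (by linarith) (by linarith [log_le_log hb h])

theorem entOf_nonneg {Ω : Type*} [Fintype Ω] {μ f : Ω → ℝ} (hμ : ∀ x, 0 ≤ μ x)
    (hμ1 : ∑ x, μ x = 1) (hf : ∀ x, 0 < f x) : 0 ≤ entOf μ f := by
  obtain ⟨x, -, hx⟩ := exists_lt_of_sum_lt (s := univ) (f := 0) (g := μ) (by simp [hμ1])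
  have hm : 0 < ∑ x, μ x * f x :=
    sum_pos' (fun y _ => mul_nonneg (hμ y) (hf y).le) ⟨x, mem_univ x, mul_pos hx (hf x)⟩
  have h := log_sum_inequality (b := 1) univ (fun y _ => hμ y) (fun y _ => hf y)
    (fun _ _ => one_pos) hm (by simp [hμ1])
  simp only [Pi.one_apply, mul_one, hμ1, log_one, sub_zero] at h
  unfold entOf expec
  linarith

lemma inf'_mul_sum_le_sum {ι : Type*} [Fintype ι] [Nonempty ι] {a w e d : ι → ℝ}
    (hw : ∀ i, 0 ≤ w i) (he : ∀ i, 0 ≤ e i) (hd : ∀ i, a i * e i ≤ d i) :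
    univ.inf' univ_nonempty a * ∑ i, w i * e i ≤ ∑ i, w i * d i := by
  rw [mul_sum]
  refine sum_le_sum fun i _ => ?_
  rw [mul_left_comm]
  exact mul_le_mul_of_nonneg_left
    ((mul_le_mul_of_nonneg_right (inf'_le _ (mem_univ i)) (he i)).trans (hd i)) (hw i)

section Generator

variable {α : Type*} {μ : α → ℝ} {K : α → α → ℝ}

lemma neg_sum_mul_sum_eq_sum_sum [Fintype α] (hrow : ∀ x, ∑ y, K x y = 0) (u v : α → ℝ) :
    -(∑ x, μ x * u x * ∑ y, K x y * v y) = ∑ x, ∑ y, μ x * K x y * (u x * (v x - v y)) := by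
  rw [← sum_neg_distrib]
  refine sum_congr rfl fun x _ => ?_
  have h : ∑ y, μ x * K x y * (u x * (v x - v y)) =
      μ x * u x * v x * ∑ y, K x y - μ x * u x * ∑ y, K x y * v y := by
    rw [mul_sum, mul_sum, ← sum_sub_distrib]
    exact sum_congr rfl fun y _ => by ring
  rw [h, hrow, mul_zero, zero_sub]

lemma sum_sum_mul_sub_eq_half (s : Finset α) (hrev : ∀ x y, μ x * K x y = μ y * K y x)
    (u v : α → ℝ) :
    ∑ x ∈ s, ∑ y ∈ s, μ x * K x y * (u x * (v x - v y)) =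
      1 / 2 * ∑ x ∈ s, ∑ y ∈ s, μ x * K x y * ((u x - u y) * (v x - v y)) := by
  have hswap : ∑ x ∈ s, ∑ y ∈ s, μ x * K x y * (u x * (v x - v y)) =
      ∑ x ∈ s, ∑ y ∈ s, μ x * K x y * (u y * (v y - v x)) := by
    rw [sum_comm]
    exact sum_congr rfl fun x _ => sum_congr rfl fun y _ => by rw [hrev y x]
  have hsplit : ∑ x ∈ s, ∑ y ∈ s, μ x * K x y * ((u x - u y) * (v x - v y)) =
      ∑ x ∈ s, ∑ y ∈ s, μ x * K x y * (u x * (v x - v y)) +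
        ∑ x ∈ s, ∑ y ∈ s, μ x * K x y * (u y * (v y - v x)) := by
    rw [← sum_add_distrib]
    exact sum_congr rfl fun x _ => by rw [← sum_add_distrib]; exact sum_congr rfl fun y _ => by ring
  rw [hsplit, ← hswap]
  ring

lemma neg_sum_mul_sum_eq_half_sum_sum [Fintype α] (hrow : ∀ x, ∑ y, K x y = 0)
    (hrev : ∀ x y, μ x * K x y = μ y * K y x) (u v : α → ℝ) :
    -(∑ x, μ x * u x * ∑ y, K x y * v y) =
      1 / 2 * ∑ x, ∑ y, μ x * K x y * ((u x - u y) * (v x - v y)) := by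
  rw [neg_sum_mul_sum_eq_sum_sum hrow, sum_sum_mul_sub_eq_half univ hrev]

lemma neg_sum_mul_sum_eq_half_sum_sum_erase [Fintype α] [DecidableEq α]
    (hrow : ∀ x, ∑ y, K x y = 0) (hrev : ∀ x y, μ x * K x y = μ y * K y x) (u v : α → ℝ) :
    -(∑ x, μ x * u x * ∑ y, K x y * v y) =
      1 / 2 * ∑ x, ∑ y ∈ univ.erase x, μ x * K x y * ((u x - u y) * (v x - v y)) := by
  rw [neg_sum_mul_sum_eq_half_sum_sum hrow hrev]
  congr 1
  exact sum_congr rfl fun x _ => (sum_erase _ (by simp)).symm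

end Generator

section Blocks

variable {Ω I : Type*} [DecidableEq I] {p : Ω → I} {π : Ω → ℝ} {pbar : I → ℝ}
  {cond : I → Ω → ℝ}

lemma pbar_mul_cond {i : I} (hpbar_ne : pbar i ≠ 0)
    (hcond : ∀ i x, cond i x = if p x = i then π x / pbar i else 0) (x : Ω) :
    pbar i * cond i x = if p x = i then π x else 0 := by
  rw [hcond]
  split_ifs
  · field_simp
  · rw [mul_zero]

lemma cond_nonneg (hπ : ∀ x, 0 ≤ π x) (hpbar_pos : ∀ i, 0 < pbar i)
    (hcond : ∀ i x, cond i x = if p x = i then π x / pbar i else 0) (i : I) (x : Ω) :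
    0 ≤ cond i x := by
  rw [hcond]
  split_ifs
  · exact div_nonneg (hπ x) (hpbar_pos i).le
  · exact le_rfl

variable [Fintype Ω]

lemma sum_sum_eq_sum_sum_blocks [Fintype I] (p : Ω → I) (F : Ω → Ω → ℝ) :
    ∑ x, ∑ y, F x y = ∑ i, ∑ j, ∑ x ∈ univ.filter (fun x => p x = i),
      ∑ y ∈ univ.filter (fun y => p y = j), F x y := by
  rw [← sum_fiberwise univ p fun x => ∑ y, F x y]
  refine sum_congr rfl fun i _ => ?_
  exact (sum_congr rfl fun x _ => (sum_fiberwise univ p (F x)).symm).trans sum_comm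

lemma pbar_pos (hπ : ∀ x, 0 < π x) (hsurj : Function.Surjective p)
    (hpbar : ∀ i, pbar i = ∑ x ∈ univ.filter (fun x => p x = i), π x) (i : I) : 0 < pbar i := by
  obtain ⟨x, rfl⟩ := hsurj i
  rw [hpbar]
  exact sum_pos (fun y _ => hπ y) ⟨x, by simp⟩

lemma sum_pbar [Fintype I]
    (hpbar : ∀ i, pbar i = ∑ x ∈ univ.filter (fun x => p x = i), π x) :
    ∑ i, pbar i = ∑ x, π x := by
  simp_rw [hpbar]
  exact sum_fiberwise univ p π

lemma sum_cond_eq_one {i : I} (hpbar_ne : pbar i ≠ 0)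
    (hpbar : ∀ i, pbar i = ∑ x ∈ univ.filter (fun x => p x = i), π x)
    (hcond : ∀ i x, cond i x = if p x = i then π x / pbar i else 0) :
    ∑ x, cond i x = 1 := by
  simp_rw [hcond]
  rw [← sum_filter, ← sum_div, ← hpbar, div_self hpbar_ne]

lemma sum_block_cond_mul (hcond : ∀ i x, cond i x = if p x = i then π x / pbar i else 0)
    (i : I) (h : Ω → ℝ) :
    ∑ x ∈ univ.filter (fun x => p x = i), cond i x * h x = expec (cond i) h := by
  rw [sum_filter]
  refine sum_congr rfl fun x _ => ?_
  rw [hcond]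
  split_ifs <;> simp

lemma expec_cond_pos {f : Ω → ℝ} (hπ : ∀ x, 0 < π x) (hsurj : Function.Surjective p)
    (hpbar_pos : ∀ i, 0 < pbar i)
    (hcond : ∀ i x, cond i x = if p x = i then π x / pbar i else 0) (hf : ∀ x, 0 < f x)
    (i : I) : 0 < expec (cond i) f := by
  obtain ⟨x, rfl⟩ := hsurj i
  refine sum_pos' (fun y _ => mul_nonneg (cond_nonneg (fun z => (hπ z).le) hpbar_pos hcond _ y)
    (hf y).le) ⟨x, mem_univ x, mul_pos ?_ (hf x)⟩
  rw [hcond, if_pos rfl]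
  exact div_pos (hπ x) (hpbar_pos _)

lemma sum_pbar_mul_expec_cond [Fintype I] (hpbar_ne : ∀ i, pbar i ≠ 0)
    (hcond : ∀ i x, cond i x = if p x = i then π x / pbar i else 0) (h : Ω → ℝ) :
    ∑ i, pbar i * expec (cond i) h = expec π h := by
  simp only [expec, mul_sum, ← mul_assoc, pbar_mul_cond (hpbar_ne _) hcond]
  rw [sum_comm]
  simp [ite_mul]

theorem entOf_eq_sum_entOf_cond_add [Fintype I] (hpbar_ne : ∀ i, pbar i ≠ 0)
    (hcond : ∀ i x, cond i x = if p x = i then π x / pbar i else 0) (f : Ω → ℝ) :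
    entOf π f = ∑ i, pbar i * entOf (cond i) f + entOf pbar (fun i => expec (cond i) f) := by
  have htower := sum_pbar_mul_expec_cond hpbar_ne hcond
  unfold entOf
  rw [← htower, ← htower]
  simp only [expec, mul_sub, sum_sub_distrib]
  ring

lemma pbar_mul_restriction_dirichlet [DecidableEq Ω] {i : I} (hpbar_ne : pbar i ≠ 0)
    (hcond : ∀ i x, cond i x = if p x = i then π x / pbar i else 0) (K : Ω → Ω → ℝ)
    (u v : Ω → ℝ) :
    pbar i * -(∑ x, cond i x * u x *
        ∑ y ∈ univ.filter (fun y => p y = i ∧ y ≠ x), K x y * (v y - v x)) =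
      ∑ x ∈ univ.filter (fun x => p x = i), ∑ y ∈ univ.filter (fun y => p y = i),
        π x * K x y * (u x * (v x - v y)) := by
  rw [mul_neg, mul_sum, ← sum_neg_distrib, sum_filter]
  refine sum_congr rfl fun x _ => ?_
  split_ifs with hx
  · have hblock : univ.filter (fun y => p y = i ∧ y ≠ x) =
        (univ.filter fun y => p y = i).erase x := by
      ext y
      simp [and_comm]
    have hπx := pbar_mul_cond hpbar_ne hcond x
    rw [if_pos hx] at hπx
    rw [hblock, sum_erase (f := fun y => K x y * (v y - v x)) _ (by simp), mul_sum, mul_sum,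
      ← sum_neg_distrib]
    exact sum_congr rfl fun y _ => by rw [← hπx]; ring
  · rw [hcond, if_neg hx]
    simp

lemma pbar_mul_Qbar_comm {Q : Ω → Ω → ℝ} {Qbar : I → I → ℝ}
    (hpbar_ne : ∀ i, pbar i ≠ 0) (hrev : ∀ x y, π x * Q x y = π y * Q y x)
    (hQbar : ∀ i j, i ≠ j → Qbar i j =
      (1 / pbar i) * ∑ x ∈ univ.filter (fun x => p x = i),
        ∑ y ∈ univ.filter (fun y => p y = j), π x * Q x y) (i j : I) :
    pbar i * Qbar i j = pbar j * Qbar j i := by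
  have hflow : ∀ i j, i ≠ j → pbar i * Qbar i j = ∑ x ∈ univ.filter (fun x => p x = i),
      ∑ y ∈ univ.filter (fun y => p y = j), π x * Q x y := fun i j hij => by
    rw [hQbar i j hij, ← mul_assoc, mul_one_div_cancel (hpbar_ne i), one_mul]
  rcases eq_or_ne i j with rfl | hij
  · rfl
  rw [hflow i j hij, hflow j i hij.symm, sum_comm]
  exact sum_congr rfl fun y _ => sum_congr rfl fun x _ => hrev x y

theorem neg_sum_mul_sum_eq_restriction_add_cross [Fintype I] [DecidableEq Ω]
    {Q : Ω → Ω → ℝ} (hQrow : ∀ x, ∑ y, Q x y = 0) (hrev : ∀ x y, π x * Q x y = π y * Q y x)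
    (hpbar_ne : ∀ i, pbar i ≠ 0)
    (hcond : ∀ i x, cond i x = if p x = i then π x / pbar i else 0) (u v : Ω → ℝ) :
    -(∑ x, π x * u x * ∑ y, Q x y * v y) =
      ∑ i, pbar i * -(∑ x, cond i x * u x *
        ∑ y ∈ univ.filter (fun y => p y = i ∧ y ≠ x), Q x y * (v y - v x)) +
      1 / 2 * ∑ i, ∑ j ∈ univ.erase i, ∑ x ∈ univ.filter (fun x => p x = i),
        ∑ y ∈ univ.filter (fun y => p y = j), π x * Q x y * ((u x - u y) * (v x - v y)) := by
  rw [neg_sum_mul_sum_eq_half_sum_sum hQrow hrev, sum_sum_eq_sum_sum_blocks p,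
    sum_congr rfl fun i _ => (add_sum_erase _ _ (mem_univ i)).symm, sum_add_distrib, mul_add,
    mul_sum]
  congr 1
  refine sum_congr rfl fun i _ => ?_
  rw [pbar_mul_restriction_dirichlet (hpbar_ne i) hcond, sum_sum_mul_sub_eq_half _ hrev]

lemma pbar_mul_Qbar_term_le_block_sum {Q : Ω → Ω → ℝ} {Qbar : I → I → ℝ}
    {κ : Ω → Ω → ℝ} {χ : ℝ} {f : Ω → ℝ} {i j : I} (hij : i ≠ j) (hπ : ∀ x, 0 < π x)
    (hpbar_pos : 0 < pbar i) (hQoff : ∀ x y, x ≠ y → 0 ≤ Q x y)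
    (hcond : ∀ i x, cond i x = if p x = i then π x / pbar i else 0)
    (hf : ∀ x, 0 < f x) (hgi : 0 < expec (cond i) f) (hgj : 0 < expec (cond j) f)
    (hκ : ∀ x y, 0 ≤ κ x y)
    (hmarg1 : 0 < Qbar i j → ∀ x, p x = i →
      ∑ y ∈ univ.filter (fun y => p y = j), κ x y = cond i x)
    (hmarg2 : 0 < Qbar i j → ∀ y, p y = j →
      ∑ x ∈ univ.filter (fun x => p x = i), κ x y = cond j y)
    (hχ : 0 ≤ χ)
    (hχle : ∀ x y, p x = i → p y = j → 0 < Qbar i j →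
      χ * (pbar i * Qbar i j * κ x y) ≤ π x * Q x y) :
    χ * (pbar i * Qbar i j * ((expec (cond i) f - expec (cond j) f) *
        (log (expec (cond i) f) - log (expec (cond j) f)))) ≤
      ∑ x ∈ univ.filter (fun x => p x = i), ∑ y ∈ univ.filter (fun y => p y = j),
        π x * Q x y * ((f x - f y) * (log (f x) - log (f y))) := by
  have hΦ : ∀ x y, 0 ≤ (f x - f y) * (log (f x) - log (f y)) := fun x y =>
    sub_mul_log_sub_log_nonneg (hf x) (hf y)
  rcases lt_or_ge 0 (Qbar i j) with hQ | hQ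
  · have hcoupling := sub_mul_log_sub_log_le_sum_coupling _ _ (fun x _ y _ => hκ x y)
      (fun x hx => hmarg1 hQ x (mem_filter.1 hx).2) (fun y hy => hmarg2 hQ y (mem_filter.1 hy).2)
      (fun x _ => hf x) (fun y _ => hf y) (by rwa [sum_block_cond_mul hcond])
      (by rwa [sum_block_cond_mul hcond])
    rw [sum_block_cond_mul hcond, sum_block_cond_mul hcond] at hcoupling
    calc _ ≤ χ * (pbar i * Qbar i j * ∑ x ∈ univ.filter (fun x => p x = i),
            ∑ y ∈ univ.filter (fun y => p y = j),
              κ x y * ((f x - f y) * (log (f x) - log (f y)))) := by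
          gcongr
      _ = ∑ x ∈ univ.filter (fun x => p x = i), ∑ y ∈ univ.filter (fun y => p y = j),
            χ * (pbar i * Qbar i j * κ x y) * ((f x - f y) * (log (f x) - log (f y))) := by
          simp only [mul_sum]
          exact sum_congr rfl fun x _ => sum_congr rfl fun y _ => by ring
      _ ≤ _ := sum_le_sum fun x hx => sum_le_sum fun y hy => mul_le_mul_of_nonneg_right
          (hχle x y (mem_filter.1 hx).2 (mem_filter.1 hy).2 hQ) (hΦ x y)
  · refine (mul_nonpos_of_nonneg_of_nonpos hχ (mul_nonpos_of_nonpos_of_nonneg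
      (mul_nonpos_of_nonneg_of_nonpos hpbar_pos.le hQ) (sub_mul_log_sub_log_nonneg hgi hgj))).trans
      (sum_nonneg fun x hx => sum_nonneg fun y hy => mul_nonneg (mul_nonneg (hπ x).le
        (hQoff x y ?_)) (hΦ x y))
    rintro rfl
    exact hij ((mem_filter.1 hx).2.symm.trans (mem_filter.1 hy).2)

lemma chi_mul_proj_dirichlet_le_cross [Fintype I] {Q : Ω → Ω → ℝ} {Qbar : I → I → ℝ}
    {κ : I → I → Ω → Ω → ℝ} {χ : ℝ} {f : Ω → ℝ} (hπ : ∀ x, 0 < π x)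
    (hpbar_pos : ∀ i, 0 < pbar i) (hQoff : ∀ x y, x ≠ y → 0 ≤ Q x y)
    (hrev : ∀ x y, π x * Q x y = π y * Q y x)
    (hQbar : ∀ i j, i ≠ j → Qbar i j =
      (1 / pbar i) * ∑ x ∈ univ.filter (fun x => p x = i),
        ∑ y ∈ univ.filter (fun y => p y = j), π x * Q x y)
    (hQbarrow : ∀ i, ∑ j, Qbar i j = 0)
    (hcond : ∀ i x, cond i x = if p x = i then π x / pbar i else 0)
    (hf : ∀ x, 0 < f x) (hg_pos : ∀ i, 0 < expec (cond i) f) (hκ : ∀ i j x y, 0 ≤ κ i j x y)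
    (hmarg1 : ∀ i j, i ≠ j → 0 < Qbar i j → ∀ x, p x = i →
      ∑ y ∈ univ.filter (fun y => p y = j), κ i j x y = cond i x)
    (hmarg2 : ∀ i j, i ≠ j → 0 < Qbar i j → ∀ y, p y = j →
      ∑ x ∈ univ.filter (fun x => p x = i), κ i j x y = cond j y)
    (hχ : 0 ≤ χ)
    (hχle : ∀ i j x y, i ≠ j → p x = i → p y = j → 0 < Qbar i j →
      χ * (pbar i * Qbar i j * κ i j x y) ≤ π x * Q x y) :
    χ * -(∑ i, pbar i * expec (cond i) f * ∑ j, Qbar i j * log (expec (cond j) f)) ≤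
      1 / 2 * ∑ i, ∑ j ∈ univ.erase i, ∑ x ∈ univ.filter (fun x => p x = i),
        ∑ y ∈ univ.filter (fun y => p y = j),
          π x * Q x y * ((f x - f y) * (log (f x) - log (f y))) := by
  rw [neg_sum_mul_sum_eq_half_sum_sum_erase hQbarrow
    (pbar_mul_Qbar_comm (fun i => (hpbar_pos i).ne') hrev hQbar), mul_left_comm]
  refine mul_le_mul_of_nonneg_left ?_ (by norm_num)
  rw [mul_sum]
  refine sum_le_sum fun i _ => ?_
  rw [mul_sum]
  refine sum_le_sum fun j hj => ?_
  have hij := (ne_of_mem_erase hj).symm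
  exact pbar_mul_Qbar_term_le_block_sum hij hπ (hpbar_pos i) hQoff hcond hf (hg_pos i)
    (hg_pos j) (hκ i j) (hmarg1 i j hij) (hmarg2 i j hij) hχ (hχle i j · · hij)

end Blocks

/-- Modified log-Sobolev case of the recursive decomposition lemma (Lemma 2.1):
if the projection chain satisfies an MLSI with constant `abar`, each restriction
chain with constant `alo i`, and the couplings have quality `χ`, then `Q` satisfies
an MLSI with constant `min (χ·abar) (min_i alo i)`. -/
theorem decomposition_mlsi {Ω I : Type*} [Fintype Ω] [Fintype I] [Nonempty I]
    [DecidableEq Ω] [DecidableEq I]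
    (π : Ω → ℝ) (Q : Ω → Ω → ℝ) (p : Ω → I)
    (hπ : ∀ x, 0 < π x) (hπ1 : ∑ x, π x = 1)
    (hQoff : ∀ x y, x ≠ y → 0 ≤ Q x y)
    (hQrow : ∀ x, ∑ y, Q x y = 0)
    (hrev : ∀ x y, π x * Q x y = π y * Q y x)
    (hsurj : Function.Surjective p)
    -- projection chain
    (pbar : I → ℝ) (hpbar : ∀ i, pbar i = ∑ x ∈ univ.filter (fun x => p x = i), π x)
    (Qbar : I → I → ℝ)
    (hQbaroff : ∀ i j, i ≠ j → Qbar i j =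
      (1 / pbar i) * ∑ x ∈ univ.filter (fun x => p x = i),
        ∑ y ∈ univ.filter (fun y => p y = j), π x * Q x y)
    (hQbarrow : ∀ i, ∑ j, Qbar i j = 0)
    -- conditional measures
    (cond : I → Ω → ℝ)
    (hcond : ∀ i x, cond i x = if p x = i then π x / pbar i else 0)
    -- couplings and their quality χ
    (κ : I → I → Ω → Ω → ℝ) (hκ : ∀ i j x y, 0 ≤ κ i j x y)
    (hmarg1 : ∀ i j, i ≠ j → 0 < Qbar i j → ∀ x, p x = i →
      ∑ y ∈ univ.filter (fun y => p y = j), κ i j x y = cond i x)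
    (hmarg2 : ∀ i j, i ≠ j → 0 < Qbar i j → ∀ y, p y = j →
      ∑ x ∈ univ.filter (fun x => p x = i), κ i j x y = cond j y)
    (χ : ℝ) (hχ : 0 ≤ χ)
    (hχle : ∀ i j x y, i ≠ j → p x = i → p y = j → 0 < Qbar i j →
      χ * (pbar i * Qbar i j * κ i j x y) ≤ π x * Q x y)
    -- modified log-Sobolev inequalities for the projection and restriction chains
    (abar : ℝ)
    (hproj : ∀ g : I → ℝ, (∀ i, 0 < g i) →
      -(∑ i, pbar i * g i * ∑ j, Qbar i j * Real.log (g j)) ≥ abar * entOf pbar g)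
    (alo : I → ℝ)
    (hres : ∀ i, ∀ f : Ω → ℝ, (∀ x, 0 < f x) →
      -(∑ x, cond i x * f x *
          ∑ y ∈ univ.filter (fun y => p y = i ∧ y ≠ x),
            Q x y * (Real.log (f y) - Real.log (f x))) ≥
        alo i * entOf (cond i) f) :
    ∀ f : Ω → ℝ, (∀ x, 0 < f x) →
      -(∑ x, π x * f x * ∑ y, Q x y * Real.log (f y)) ≥
        min (χ * abar) (Finset.univ.inf' Finset.univ_nonempty alo) * entOf π f := by
  intro f hf
  have hpbar_pos := pbar_pos hπ hsurj hpbar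
  have hpbar_ne : ∀ i, pbar i ≠ 0 := fun i => (hpbar_pos i).ne'
  have hg_pos := expec_cond_pos hπ hsurj hpbar_pos hcond hf
  have hent_cond : ∀ i, 0 ≤ entOf (cond i) f := fun i =>
    entOf_nonneg (cond_nonneg (fun x => (hπ x).le) hpbar_pos hcond i)
      (sum_cond_eq_one (hpbar_ne i) hpbar hcond) hf
  have hent_proj : 0 ≤ entOf pbar (fun i => expec (cond i) f) :=
    entOf_nonneg (fun i => (hpbar_pos i).le) ((sum_pbar hpbar).trans hπ1) hg_pos
  have hrestr := inf'_mul_sum_le_sum (fun i => (hpbar_pos i).le) hent_cond (fun i => hres i f hf)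
  have hcross := (mul_le_mul_of_nonneg_left (hproj _ hg_pos) hχ).trans
    (chi_mul_proj_dirichlet_le_cross hπ hpbar_pos hQoff hrev hQbaroff hQbarrow hcond hf hg_pos hκ
      hmarg1 hmarg2 hχ hχle)
  rw [ge_iff_le, entOf_eq_sum_entOf_cond_add hpbar_ne hcond,
    neg_sum_mul_sum_eq_restriction_add_cross hQrow hrev hpbar_ne hcond f (fun x => log (f x)),
    mul_add]
  exact add_le_add ((mul_le_mul_of_nonneg_right (min_le_right _ _)
      (sum_nonneg fun i _ => mul_nonneg (hpbar_pos i).le (hent_cond i))).trans hrestr)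
    (((mul_le_mul_of_nonneg_right (min_le_left _ _) hent_proj).trans_eq (mul_assoc _ _ _)).trans
      hcross)
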